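/- arXiv:1005.0983 — 3 statements merged into one kernel-verified Lean document; each statement's English description precedes it below -/
import Mathlib

section
/- The Fisher information of scale I_s1 is weakly lower semicontinuous: if probability measures F_n converge weakly to F, then I_s1(F) ≤ liminf_n I_s1(F_n). -/
open MeasureTheory Filter Set
open scoped ENNReal Topology
noncomputable section

/-- `φ` is differentiable with continuous, compactly supported derivative. -/
def Cc1 (φ : ℝ → ℝ) : Prop :=
  Differentiable ℝ φ ∧ Continuous (deriv φ) ∧ HasCompactSupport (deriv φ)

/-- Fisher information of scale, with conventions 0/0 = 0 and a/0 = ∞ for a > 0. -/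
def Is1 (F : Measure ℝ) : ℝ≥0∞ :=
  ⨆ (φ : ℝ → ℝ) (_ : Cc1 φ),
    ENNReal.ofReal ((∫ x, x * deriv φ x ∂F) ^ 2) / ENNReal.ofReal (∫ x, φ x ^ 2 ∂F)

/-- A continuous compactly supported function is bounded. -/
lemma abs_bound_of_compactSupport {g : ℝ → ℝ} (hg : Continuous g)
    (hs : HasCompactSupport g) : ∃ C, ∀ x, |g x| ≤ C := by
  obtain ⟨C, hC⟩ := hs.exists_bound_of_continuousOn hg.continuousOn
  refine ⟨max C 0, fun x => ?_⟩
  by_cases hx : x ∈ tsupport g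
  · exact le_trans (by simpa [Real.norm_eq_abs] using hC x hx) (le_max_left _ _)
  · simp [image_eq_zero_of_notMem_tsupport hx]

lemma eq_of_deriv_zero_on (φ : ℝ → ℝ) (hd : Differentiable ℝ φ) (hc : Continuous (deriv φ))
    (x y : ℝ) (h : ∀ t ∈ uIcc x y, deriv φ t = 0) : φ y = φ x := by
  have hftc := intervalIntegral.integral_deriv_eq_sub (f := φ) (a := x) (b := y)
    (fun t _ => hd t) (hc.intervalIntegrable x y)
  rw [intervalIntegral.integral_congr (g := fun _ => (0 : ℝ)) h,
    intervalIntegral.integral_zero] at hftc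
  linarith [hftc]

/-- A `Cc1` function is bounded. -/
lemma phi_bound (φ : ℝ → ℝ) (h : Cc1 φ) : ∃ C, ∀ x, |φ x| ≤ C := by
  obtain ⟨hd, hc, hs⟩ := h
  obtain ⟨r, hr⟩ := hs.isBounded.subset_closedBall 0
  set R := max r 0 + 1 with hR
  have hR0 : 0 < R := by positivity
  have hz : ∀ t : ℝ, R ≤ |t| → deriv φ t = 0 := by
    intro t ht
    apply image_eq_zero_of_notMem_tsupport
    intro hmem
    have := hr hmem
    rw [Metric.mem_closedBall, dist_zero_right, Real.norm_eq_abs] at this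
    have := le_max_left r 0
    linarith
  obtain ⟨C, hC⟩ := (isCompact_Icc (a := -R) (b := R)).exists_bound_of_continuousOn
    hd.continuous.continuousOn
  refine ⟨C, fun x => ?_⟩
  rcases le_total x R with hx | hx
  · rcases le_total (-R) x with hx' | hx'
    · simpa [Real.norm_eq_abs] using hC x ⟨hx', hx⟩
    · have heq : φ x = φ (-R) := by
        apply eq_of_deriv_zero_on φ hd hc (-R) x
        intro t ht
        rw [uIcc_of_ge hx'] at ht
        exact hz t (by rw [abs_of_nonpos (by linarith [ht.2])]; linarith [ht.2])
      rw [heq]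
      simpa [Real.norm_eq_abs] using hC (-R) ⟨le_refl _, by linarith⟩
  · have heq : φ x = φ R := by
      apply eq_of_deriv_zero_on φ hd hc R x
      intro t ht
      rw [uIcc_of_le hx] at ht
      exact hz t (by rw [abs_of_nonneg (by linarith [ht.1])]; exact ht.1)
    rw [heq]
    simpa [Real.norm_eq_abs] using hC R ⟨by linarith, le_refl _⟩

theorem Is1_weakly_lsc (F : ℕ → Measure ℝ) (G : Measure ℝ)
    [∀ n, IsProbabilityMeasure (F n)] [IsProbabilityMeasure G]
    (hweak : ∀ g : ℝ → ℝ, Continuous g → (∃ C, ∀ x, |g x| ≤ C) →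
      Tendsto (fun n => ∫ x, g x ∂(F n)) atTop (𝓝 (∫ x, g x ∂G))) :
    Is1 G ≤ atTop.liminf (fun n => Is1 (F n)) := by
  rw [Is1]
  refine iSup₂_le fun φ hφ => ?_
  have hg1 : Continuous (fun x : ℝ => x * deriv φ x) := continuous_id.mul hφ.2.1
  have hcs1 : HasCompactSupport (fun x : ℝ => x * deriv φ x) := hφ.2.2.mul_left
  have h1 := hweak _ hg1 (abs_bound_of_compactSupport hg1 hcs1)
  have hg2 : Continuous fun x => φ x ^ 2 := hφ.1.continuous.pow 2
  obtain ⟨C, hC⟩ := phi_bound φ hφ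
  have hb2 : ∃ C', ∀ x, |φ x ^ 2| ≤ C' := by
    refine ⟨C ^ 2, fun x => ?_⟩
    rw [abs_pow]
    exact pow_le_pow_left₀ (abs_nonneg _) (hC x) 2
  have h2 := hweak _ hg2 hb2
  by_cases haz : (∫ x, x * deriv φ x ∂G) = 0
  · simp [haz]
  · have hA : ENNReal.ofReal ((∫ x, x * deriv φ x ∂G) ^ 2) ≠ 0 := by
      rw [ne_eq, ENNReal.ofReal_eq_zero, not_le]
      positivity
    have htend : Tendsto
        (fun n => ENNReal.ofReal ((∫ x, x * deriv φ x ∂(F n)) ^ 2) /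
          ENNReal.ofReal (∫ x, φ x ^ 2 ∂(F n))) atTop
        (𝓝 (ENNReal.ofReal ((∫ x, x * deriv φ x ∂G) ^ 2) /
          ENNReal.ofReal (∫ x, φ x ^ 2 ∂G))) :=
      ENNReal.Tendsto.div (ENNReal.tendsto_ofReal (h1.pow 2)) (Or.inl hA)
        (ENNReal.tendsto_ofReal h2) (Or.inl ENNReal.ofReal_ne_top)
    rw [← htend.liminf_eq]
    refine liminf_le_liminf (Eventually.of_forall fun n => ?_)
    rw [Is1]
    exact le_iSup₂ (f := fun ψ (_ : Cc1 ψ) =>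
      ENNReal.ofReal ((∫ x, x * deriv ψ x ∂(F n)) ^ 2) /
        ENNReal.ofReal (∫ x, ψ x ^ 2 ∂(F n))) φ hφ
end
end

section
/- The Fisher information of scale I_s1 is convex: for probability measures F_1, F_2 on ℝ and s ∈ (0,1), I_s1((1-s)F_1 + sF_2) ≤ (1-s) I_s1(F_1) + s I_s1(F_2). -/
open MeasureTheory Filter Set
open scoped ENNReal Topology
noncomputable section

/-- A `Cc1` function is globally bounded. -/
lemma Cc1.bounded {φ : ℝ → ℝ} (h : Cc1 φ) : ∃ C : ℝ, 0 ≤ C ∧ ∀ x, |φ x| ≤ C := by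
  obtain ⟨R₀, hR₀⟩ := (h.2.2.isCompact.isBounded).subset_closedBall 0
  set R := max R₀ 0 with hRdef
  have hR0 : 0 ≤ R := le_max_right _ _
  have hR : tsupport (deriv φ) ⊆ Metric.closedBall 0 R :=
    hR₀.trans (Metric.closedBall_subset_closedBall (le_max_left _ _))
  have hderiv0 : ∀ x : ℝ, R < |x| → deriv φ x = 0 := by
    intro x hx
    by_contra hne
    have hmem := hR (subset_tsupport _ hne)
    rw [Metric.mem_closedBall, Real.dist_eq, sub_zero] at hmem
    linarith
  set R' := R + 1 with hR'
  have hconst_right : ∀ x, R' ≤ x → φ x = φ R' := by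
    intro x hx
    rcases eq_or_lt_of_le hx with rfl | hx'
    · rfl
    refine constant_of_has_deriv_right_zero (f := φ) (a := R') (b := x)
      h.1.continuous.continuousOn ?_ x ⟨hx, le_rfl⟩
    intro y hy
    have hy0 : deriv φ y = 0 := by
      apply hderiv0
      have h1 : R < y := by have := hy.1; simp only [hR'] at this; linarith
      exact lt_of_lt_of_le h1 (le_abs_self y)
    have hd := (h.1 y).hasDerivAt
    rw [hy0] at hd
    exact hd.hasDerivWithinAt
  have hconst_left : ∀ x, x ≤ -R' → φ x = φ (-R') := by
    intro x hx
    rcases eq_or_lt_of_le hx with rfl | hx'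
    · rfl
    have key := constant_of_has_deriv_right_zero (f := φ) (a := x) (b := -R')
      h.1.continuous.continuousOn ?_ (-R') ⟨le_of_lt hx', le_rfl⟩
    · exact key.symm
    intro y hy
    have hy0 : deriv φ y = 0 := by
      apply hderiv0
      have h1 : y < -R := by have := hy.2; simp only [hR'] at this; linarith
      have h2 : R < -y := by linarith
      exact lt_of_lt_of_le h2 (neg_le_abs y)
    have hd := (h.1 y).hasDerivAt
    rw [hy0] at hd
    exact hd.hasDerivWithinAt
  obtain ⟨x₀, hx₀mem, hx₀⟩ := (isCompact_Icc (a := -R') (b := R')).exists_isMaxOn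
    ⟨0, by constructor <;> simp [hR'] <;> linarith⟩
    (h.1.continuous.abs.continuousOn)
  refine ⟨|φ x₀|, abs_nonneg _, fun x => ?_⟩
  rcases le_or_gt x (-R') with hc | hc
  · rw [hconst_left x hc]
    exact hx₀ ⟨le_rfl, by simp [hR']; linarith⟩
  rcases le_or_gt R' x with hc2 | hc2
  · rw [hconst_right x hc2]
    exact hx₀ ⟨by simp [hR']; linarith, le_rfl⟩
  · exact hx₀ ⟨le_of_lt hc, le_of_lt hc2⟩

lemma rhs_term (cc a b : ℝ) (hc : 0 ≤ cc) (hb : 0 < b) :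
    ENNReal.ofReal cc * (ENNReal.ofReal (a^2) / ENNReal.ofReal b) =
    ENNReal.ofReal (cc * (a^2/b)) := by
  rw [← ENNReal.ofReal_div_of_pos hb, ← ENNReal.ofReal_mul hc]

lemma key_alg (a₁ a₂ b₁ b₂ s : ℝ) (hb₁ : 0 ≤ b₁) (hb₂ : 0 ≤ b₂)
    (hs : 0 < s) (hs1 : s < 1) :
    ENNReal.ofReal (((1-s)*a₁ + s*a₂)^2) / ENNReal.ofReal ((1-s)*b₁ + s*b₂) ≤
    ENNReal.ofReal (1-s) * (ENNReal.ofReal (a₁^2) / ENNReal.ofReal b₁) +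
    ENNReal.ofReal s * (ENNReal.ofReal (a₂^2) / ENNReal.ofReal b₂) := by
  have h1s : (0:ℝ) < 1 - s := by linarith
  rcases eq_or_lt_of_le hb₁ with hb₁0 | hb₁pos
  · rcases eq_or_ne a₁ 0 with ha₁ | ha₁
    · rcases eq_or_lt_of_le hb₂ with hb₂0 | hb₂pos
      · rcases eq_or_ne a₂ 0 with ha₂ | ha₂
        · simp [← hb₁0, ← hb₂0, ha₁, ha₂]
        · refine le_trans le_top ?_
          rw [← hb₂0, ENNReal.ofReal_zero, ENNReal.div_zero (by positivity),
            ENNReal.mul_top (by simp [ENNReal.ofReal_eq_zero]; linarith)]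
          simp
      · rw [← hb₁0, ha₁]
        simp only [mul_zero, zero_add, ENNReal.ofReal_zero]
        rw [mul_pow, rhs_term s a₂ b₂ hs.le hb₂pos,
          ← ENNReal.ofReal_div_of_pos (mul_pos hs hb₂pos)]
        have : s^2 * a₂^2 / (s * b₂) = s * (a₂^2 / b₂) := by
          field_simp
        rw [this]
        exact le_add_self
    · refine le_trans le_top ?_
      rw [← hb₁0, ENNReal.ofReal_zero, ENNReal.div_zero (by positivity),
        ENNReal.mul_top (by simp [ENNReal.ofReal_eq_zero]; linarith)]
      simp
  · rcases eq_or_lt_of_le hb₂ with hb₂0 | hb₂pos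
    · rcases eq_or_ne a₂ 0 with ha₂ | ha₂
      · rw [← hb₂0, ha₂]
        simp only [mul_zero, add_zero, ENNReal.ofReal_zero]
        rw [mul_pow, rhs_term (1-s) a₁ b₁ h1s.le hb₁pos,
          ← ENNReal.ofReal_div_of_pos (mul_pos h1s hb₁pos)]
        have : (1-s)^2 * a₁^2 / ((1-s) * b₁) = (1-s) * (a₁^2 / b₁) := by
          field_simp
        rw [this]
        exact le_self_add
      · refine le_trans le_top ?_
        rw [← hb₂0, ENNReal.ofReal_zero, ENNReal.div_zero (by positivity),
          ENNReal.mul_top (by simp [ENNReal.ofReal_eq_zero]; linarith)]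
        simp
    · have hD : (0:ℝ) < (1-s)*b₁ + s*b₂ := by positivity
      rw [← ENNReal.ofReal_div_of_pos hD, rhs_term _ _ _ h1s.le hb₁pos,
        rhs_term _ _ _ hs.le hb₂pos, ← ENNReal.ofReal_add (by positivity) (by positivity)]
      apply ENNReal.ofReal_le_ofReal
      rw [div_le_iff₀ hD]
      have e₁ : a₁^2/b₁*b₁ = a₁^2 := div_mul_cancel₀ _ hb₁pos.ne'
      have e₂ : a₂^2/b₂*b₂ = a₂^2 := div_mul_cancel₀ _ hb₂pos.ne'
      have cross : 2*(a₁*a₂) ≤ a₁^2/b₁*b₂ + a₂^2/b₂*b₁ := by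
        rw [← sub_nonneg]
        have : a₁^2/b₁*b₂ + a₂^2/b₂*b₁ - 2*(a₁*a₂) = (a₁*b₂ - a₂*b₁)^2/(b₁*b₂) := by
          field_simp; ring
        rw [this]; positivity
      nlinarith [mul_pos hs h1s, sq_nonneg (a₁ - a₂)]

theorem Is1_convex (F₁ F₂ : Measure ℝ) [IsProbabilityMeasure F₁] [IsProbabilityMeasure F₂]
    (s : ℝ) (hs : s ∈ Set.Ioo (0:ℝ) 1) :
    Is1 (ENNReal.ofReal (1 - s) • F₁ + ENNReal.ofReal s • F₂) ≤
      ENNReal.ofReal (1 - s) * Is1 F₁ + ENNReal.ofReal s * Is1 F₂ := by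
  obtain ⟨hs0, hs1⟩ := hs
  have h1s : (0:ℝ) < 1 - s := by linarith
  rw [Is1]
  refine iSup₂_le fun φ hφ => ?_
  -- integrability facts
  have hcont1 : Continuous (fun x : ℝ => x * deriv φ x) := continuous_id.mul hφ.2.1
  have hcs : HasCompactSupport (fun x : ℝ => x * deriv φ x) := hφ.2.2.mul_left
  have hi1 : Integrable (fun x : ℝ => x * deriv φ x) F₁ :=
    hcont1.integrable_of_hasCompactSupport hcs
  have hi2 : Integrable (fun x : ℝ => x * deriv φ x) F₂ :=
    hcont1.integrable_of_hasCompactSupport hcs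
  obtain ⟨C, hC0, hC⟩ := hφ.bounded
  have hsq : ∀ (μ : Measure ℝ) [IsProbabilityMeasure μ],
      Integrable (fun x => φ x ^ 2) μ := by
    intro μ _
    refine (integrable_const (C^2)).mono'
      ((hφ.1.continuous.pow 2).aestronglyMeasurable) ?_
    filter_upwards with x
    rw [Real.norm_eq_abs, abs_pow]
    exact pow_le_pow_left₀ (abs_nonneg _) (hC x) 2
  have key_int : ∀ f : ℝ → ℝ, Integrable f F₁ → Integrable f F₂ →
      ∫ x, f x ∂(ENNReal.ofReal (1 - s) • F₁ + ENNReal.ofReal s • F₂) =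
        (1-s) * ∫ x, f x ∂F₁ + s * ∫ x, f x ∂F₂ := by
    intro f h1 h2
    rw [integral_add_measure (h1.smul_measure ENNReal.ofReal_ne_top)
      (h2.smul_measure ENNReal.ofReal_ne_top),
      integral_smul_measure, integral_smul_measure,
      ENNReal.toReal_ofReal h1s.le, ENNReal.toReal_ofReal hs0.le]
    simp [smul_eq_mul]
  rw [key_int _ hi1 hi2, key_int _ (hsq F₁) (hsq F₂)]
  refine le_trans (key_alg _ _ _ _ s (integral_nonneg fun x => sq_nonneg _)
    (integral_nonneg fun x => sq_nonneg _) hs0 hs1) ?_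
  have hle1 : ENNReal.ofReal ((∫ x, x * deriv φ x ∂F₁)^2) /
      ENNReal.ofReal (∫ x, φ x ^ 2 ∂F₁) ≤ Is1 F₁ :=
    le_iSup₂ (f := fun ψ (_ : Cc1 ψ) =>
      ENNReal.ofReal ((∫ x, x * deriv ψ x ∂F₁) ^ 2) /
        ENNReal.ofReal (∫ x, ψ x ^ 2 ∂F₁)) φ hφ
  have hle2 : ENNReal.ofReal ((∫ x, x * deriv φ x ∂F₂)^2) /
      ENNReal.ofReal (∫ x, φ x ^ 2 ∂F₂) ≤ Is1 F₂ :=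
    le_iSup₂ (f := fun ψ (_ : Cc1 ψ) =>
      ENNReal.ofReal ((∫ x, x * deriv ψ x ∂F₂) ^ 2) /
        ENNReal.ofReal (∫ x, ψ x ^ 2 ∂F₂)) φ hφ
  exact add_le_add (mul_le_mul_right hle1 _) (mul_le_mul_right hle2 _)
end
end

section
/- For any finite Borel measure F on ℝ with F({0}) = 0, the class D_c1 := {x ↦ x φ'(x) : φ ∈ C_c1} is dense in L²(F). -/
/-!
Approximate `h` in `L^p` by a continuous compactly supported `g`. Multiplying `g` by a continuous
cutoff that vanishes near `0` and equals `1` outside `closedBall 0 δ` changes `g` only on that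
ball, whose measure tends to `μ {0} = 0` as `δ → 0`; by absolute continuity of the `L^p` norm the
change is small. Finally, a continuous compactly supported `f` vanishing near `0` is `x φ'(x)` for
the primitive `φ` of `f x / x`.
-/

open MeasureTheory Filter Set
open scoped ENNReal Topology
noncomputable section

theorem tendsto_measure_closedBall_nhdsGT {α : Type*} [MetricSpace α] [MeasurableSpace α]
    [OpensMeasurableSpace α] (μ : Measure α) [IsFiniteMeasure μ] (a : α) :
    Tendsto (fun r => μ (Metric.closedBall a r)) (𝓝[>] 0) (𝓝 (μ {a})) := by
  have h := tendsto_measure_cthickening_of_isClosed (μ := μ) ⟨1, one_pos, measure_ne_top μ _⟩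
    (isClosed_singleton (x := a))
  refine (h.mono_left nhdsWithin_le_nhds).congr' ?_
  filter_upwards [self_mem_nhdsWithin] with r hr
  rw [Metric.cthickening_singleton a hr.le]

theorem continuous_div_id_of_eventuallyEq_zero {𝕜 : Type*} [NormedField 𝕜] {f : 𝕜 → 𝕜}
    (hf : Continuous f) (hf0 : f =ᶠ[𝓝 0] 0) : Continuous fun x => f x / x := by
  refine continuous_iff_continuousAt.2 fun x => ?_
  rcases eq_or_ne x 0 with rfl | hx
  · refine (continuousAt_const (y := (0 : 𝕜))).congr ?_
    filter_upwards [hf0] with y hy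
    simp [hy]
  · exact hf.continuousAt.div continuousAt_id hx

theorem exists_Cc1_deriv_eq {u : ℝ → ℝ} (hu : Continuous u) (hcs : HasCompactSupport u) :
    ∃ φ, Cc1 φ ∧ deriv φ = u := by
  have hφ (x : ℝ) : HasDerivAt (fun y => ∫ t in (0 : ℝ)..y, u t) (u x) x :=
    (hu.integral_hasStrictDerivAt 0 x).hasDerivAt
  have hderiv : deriv (fun y => ∫ t in (0 : ℝ)..y, u t) = u := funext fun x => (hφ x).deriv
  refine ⟨_, ⟨fun x => (hφ x).differentiableAt, ?_, ?_⟩, hderiv⟩ <;> rw [hderiv] <;> assumption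

theorem exists_Cc1_mul_deriv_eq {f : ℝ → ℝ} (hf : Continuous f) (hcs : HasCompactSupport f)
    (hf0 : f =ᶠ[𝓝 0] 0) : ∃ φ, Cc1 φ ∧ ∀ x, x * deriv φ x = f x := by
  have hcs' : HasCompactSupport fun x => f x / x :=
    hcs.mono (by rw [Function.support_div]; exact inter_subset_left)
  obtain ⟨φ, hφ, hderiv⟩ := exists_Cc1_deriv_eq (continuous_div_id_of_eventuallyEq_zero hf hf0) hcs'
  refine ⟨φ, hφ, fun x => ?_⟩
  rcases eq_or_ne x 0 with rfl | hx
  · simp [hf0.eq_of_nhds]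
  · rw [hderiv, mul_div_cancel₀ _ hx]

def cutoff (δ x : ℝ) : ℝ := min 1 (max (2 * |x| / δ - 1) 0)

theorem continuous_cutoff (δ : ℝ) : Continuous (cutoff δ) := by
  unfold cutoff; fun_prop

theorem cutoff_nonneg (δ x : ℝ) : 0 ≤ cutoff δ x :=
  le_min zero_le_one (le_max_right _ _)

theorem cutoff_le_one (δ x : ℝ) : cutoff δ x ≤ 1 :=
  min_le_left _ _

theorem cutoff_eq_zero_of_two_mul_abs_le {δ x : ℝ} (hx : 2 * |x| ≤ δ) : cutoff δ x = 0 := by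
  have : 2 * |x| / δ ≤ 1 := div_le_one_of_le₀ hx ((by positivity : (0:ℝ) ≤ 2 * |x|).trans hx)
  simp [cutoff, this]

theorem cutoff_eq_one_of_le_abs {δ x : ℝ} (hδ : 0 < δ) (hx : δ ≤ |x|) : cutoff δ x = 1 := by
  have : 2 ≤ 2 * |x| / δ := by rw [le_div_iff₀ hδ]; linarith
  simp only [cutoff]
  rw [max_eq_left (by linarith), min_eq_left (by linarith)]

theorem cutoff_eventuallyEq_zero {δ : ℝ} (hδ : 0 < δ) : cutoff δ =ᶠ[𝓝 0] 0 := by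
  filter_upwards [Metric.closedBall_mem_nhds 0 (half_pos hδ)] with x hx
  rw [Metric.mem_closedBall, dist_zero_right, Real.norm_eq_abs] at hx
  exact cutoff_eq_zero_of_two_mul_abs_le (by linarith)

theorem norm_sub_mul_cutoff_le_indicator {δ : ℝ} (hδ : 0 < δ) (g : ℝ → ℝ) (x : ℝ) :
    ‖g x - g x * cutoff δ x‖ ≤ ‖(Metric.closedBall 0 δ).indicator g x‖ := by
  by_cases hx : x ∈ Metric.closedBall 0 δ
  · rw [indicator_of_mem hx, ← mul_one_sub, norm_mul]
    refine mul_le_of_le_one_right (norm_nonneg _) ?_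
    rw [Real.norm_eq_abs, abs_le]
    constructor <;> linarith [cutoff_nonneg δ x, cutoff_le_one δ x]
  · rw [Metric.mem_closedBall, dist_zero_right, Real.norm_eq_abs, not_le] at hx
    simp [cutoff_eq_one_of_le_abs hδ hx.le]

theorem MeasureTheory.MemLp.exists_eLpNorm_sub_mul_cutoff_le {μ : Measure ℝ} [IsFiniteMeasure μ]
    (h0 : μ {0} = 0) {p : ℝ≥0∞} (hp1 : 1 ≤ p) (hp : p ≠ ∞) {g : ℝ → ℝ} (hg : MemLp g p μ)
    {ε : ℝ} (hε : 0 < ε) :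
    ∃ δ > 0, eLpNorm (fun x => g x - g x * cutoff δ x) p μ ≤ ENNReal.ofReal ε := by
  obtain ⟨η, hη, hsmall⟩ := hg.eLpNorm_indicator_le hp1 hp hε
  have hball : ∀ᶠ δ in 𝓝[>] 0, μ (Metric.closedBall 0 δ) < ENNReal.ofReal η := by
    refine (tendsto_measure_closedBall_nhdsGT μ 0).eventually_lt_const ?_
    simpa [h0] using hη
  obtain ⟨δ, hδ, hδpos⟩ := (hball.and self_mem_nhdsWithin).exists
  exact ⟨δ, hδpos, (eLpNorm_mono (norm_sub_mul_cutoff_le_indicator hδpos g)).trans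
    (hsmall _ measurableSet_closedBall hδ.le)⟩

theorem MeasureTheory.MemLp.exists_Cc1_eLpNorm_sub_mul_deriv_lt {μ : Measure ℝ}
    [IsFiniteMeasure μ] (h0 : μ {0} = 0) {p : ℝ≥0∞} (hp1 : 1 ≤ p) (hp : p ≠ ∞) {h : ℝ → ℝ}
    (hh : MemLp h p μ) {ε : ℝ} (hε : 0 < ε) :
    ∃ φ : ℝ → ℝ, Cc1 φ ∧ eLpNorm (fun x => h x - x * deriv φ x) p μ < ENNReal.ofReal ε := by
  obtain ⟨g, hg_supp, hhg, hg_cont, hg_mem⟩ :=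
    hh.exists_hasCompactSupport_eLpNorm_sub_le hp (ε := ENNReal.ofReal (ε / 3))
      (ENNReal.ofReal_pos.2 (by positivity)).ne'
  obtain ⟨δ, hδ, hgδ⟩ := hg_mem.exists_eLpNorm_sub_mul_cutoff_le h0 hp1 hp
    (by positivity : 0 < ε / 3)
  obtain ⟨φ, hφ, hxφ⟩ := exists_Cc1_mul_deriv_eq (hg_cont.mul (continuous_cutoff δ))
    hg_supp.mul_right (by filter_upwards [cutoff_eventuallyEq_zero hδ] with x hx; simp [hx])
  refine ⟨φ, hφ, ?_⟩
  calc eLpNorm (fun x => h x - x * deriv φ x) p μ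
      = eLpNorm ((h - g) + fun x => g x - g x * cutoff δ x) p μ := by
        congr 1; ext x; simp [hxφ]
    _ ≤ eLpNorm (h - g) p μ + eLpNorm (fun x => g x - g x * cutoff δ x) p μ :=
        eLpNorm_add_le (hh.sub hg_mem).aestronglyMeasurable
          (hg_cont.sub (hg_cont.mul (continuous_cutoff δ))).aestronglyMeasurable hp1
    _ ≤ ENNReal.ofReal (ε / 3) + ENNReal.ofReal (ε / 3) := add_le_add hhg hgδ
    _ < ENNReal.ofReal ε := by
        rw [← ENNReal.ofReal_add (by positivity) (by positivity)]
        exact (ENNReal.ofReal_lt_ofReal_iff hε).2 (by linarith)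

theorem Dc1_dense_L2 (F : Measure ℝ) [IsFiniteMeasure F] (h0 : F {0} = 0)
    (h : ℝ → ℝ) (hh : MemLp h 2 F) :
    ∀ ε : ℝ, 0 < ε → ∃ φ : ℝ → ℝ, Cc1 φ ∧
      eLpNorm (fun x => h x - x * deriv φ x) 2 F < ENNReal.ofReal ε :=
  fun _ hε => hh.exists_Cc1_eLpNorm_sub_mul_deriv_lt h0 one_le_two ENNReal.ofNat_ne_top hε
end
end
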